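/- arXiv:2310.02252 — 4 statements merged into one kernel-verified Lean document; each statement's English description precedes it below -/
import Mathlib

section
/- Let n ≥ 1 and let x_1, …, x_n be pairwise distinct elements of a field. Then the sum over i of x_i^{n-1} divided by the product over j ≠ i of (x_i - x_j) equals 1. -/
open Polynomial Finset

/-- The left side is the leading coefficient of the Lagrange interpolant of `X ^ (#s - 1)` on the
nodes `v i`, which is `X ^ (#s - 1)` itself. -/
theorem Lagrange.sum_pow_card_sub_one_div_prod_sub {F ι : Type*} [Field F] [DecidableEq ι]
    {s : Finset ι} {v : ι → F} (hvs : Set.InjOn v s) (hs : s.Nonempty) :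
    ∑ i ∈ s, v i ^ (#s - 1) / ∏ j ∈ s.erase i, (v i - v j) = 1 := by
  have hdeg : (#s : WithBot ℕ) = (X ^ (#s - 1) : F[X]).degree + 1 := by
    rw [degree_X_pow]; norm_cast; have := hs.card_pos; omega
  simpa using (Lagrange.leadingCoeff_eq_sum hvs hdeg).symm

/-- Interpolation identity, case `k = n - 1`: for pairwise distinct
`x_1, …, x_n` in a field, `∑ i, x i ^ (n-1) / ∏_{j ≠ i} (x i - x j) = 1`. -/
theorem interpolation_identity_top {F : Type*} [Field F] (n : ℕ) (hn : 1 ≤ n)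
    (x : Fin n → F) (hx : Function.Injective x) :
    ∑ i : Fin n, x i ^ (n - 1) / ∏ j ∈ Finset.univ.erase i, (x i - x j) = 1 := by
  have huniv : (univ : Finset (Fin n)).Nonempty := univ_nonempty_iff.mpr ⟨⟨0, hn⟩⟩
  simpa using Lagrange.sum_pow_card_sub_one_div_prod_sub hx.injOn huniv
end

section
/- Let n ≥ 1, let x_1, …, x_n be pairwise distinct elements of a field, and let k ≥ 0. Then ∑_{i=1}^n x_i^k / ∏_{j≠i}(x_i - x_j) equals the complete homogeneous symmetric polynomial h_{k-n+1}(x_1, …, x_n), where h_r = 0 for r < 0 and h_0 = 1. -/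
/-- The complete homogeneous symmetric polynomial `h_r(x_1, …, x_n)`:
the sum over all multisets of size `r` from `Fin n` of the corresponding monomial. -/
noncomputable def completeHomogeneous {F : Type*} [CommRing F] (n : ℕ) (x : Fin n → F)
    (r : ℕ) : F :=
  ∑ m ∈ (Finset.univ : Finset (Fin n)).sym r, ((m : Multiset (Fin n)).map x).prod

/-!
Write `D(s)` for the sum over the nodes `s` and `H(s)` for `h_{k+1-#s}` on `s`. For distinct
`a, b ∈ s` both satisfy `(x a - x b) D(s) = D(s \ {b}) - D(s \ {a})`. For the sum, write
`x a - x b = (x i - x b) - (x i - x a)`: for `c ∈ {a, b}`, multiplying the `i`-th term by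
`x i - x c` cancels the factor `j = c` of its denominator, leaving the `i`-th term for `s \ {c}`.
For `H`, the recursion `h_{r+1}(insert a s) = x a * h_r(insert a s) + h_{r+1}(s)`, applied with
`a` and with `b` to `s` itself, gives `h_{r+1}(s \ {b}) - h_{r+1}(s \ {a}) = (x a - x b) h_r(s)`.
The two sides agree on sets of at most one node, and the recursion determines them on larger
sets of distinct nodes.
-/

open Finset

lemma exists_eq_insert_insert_of_mem {ι : Type*} [DecidableEq ι] {s : Finset ι} {a b : ι}
    (ha : a ∈ s) (hb : b ∈ s) (hab : a ≠ b) : ∃ t, a ∉ t ∧ b ∉ t ∧ s = insert a (insert b t) :=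
  ⟨(s.erase a).erase b, fun h => by simp at h, notMem_erase b _, by
    rw [insert_erase (mem_erase.2 ⟨hab.symm, hb⟩), insert_erase ha]⟩

section CompleteHomogeneousOn

variable {R ι : Type*} [DecidableEq ι]

noncomputable def completeHomogeneousOn [CommSemiring R] (x : ι → R) (s : Finset ι) (r : ℕ) :
    R :=
  ∑ f ∈ s.piAntidiag r, ∏ i ∈ s, x i ^ f i

section CommSemiring

variable [CommSemiring R] (x : ι → R)

@[simp]
lemma completeHomogeneousOn_zero (s : Finset ι) : completeHomogeneousOn x s 0 = 1 := by
  simp [completeHomogeneousOn]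

@[simp]
lemma completeHomogeneousOn_empty_succ (r : ℕ) : completeHomogeneousOn x ∅ (r + 1) = 0 := by
  simp [completeHomogeneousOn]

lemma completeHomogeneousOn_insert {a : ι} {s : Finset ι} (ha : a ∉ s) (r : ℕ) :
    completeHomogeneousOn x (insert a s) r =
      ∑ p ∈ antidiagonal r, x a ^ p.1 * completeHomogeneousOn x s p.2 := by
  rw [completeHomogeneousOn, ← cons_eq_insert _ _ ha, piAntidiag_cons ha, sum_disjiUnion]
  refine sum_congr rfl fun p _ => ?_
  rw [sum_map, completeHomogeneousOn, mul_sum]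
  refine sum_congr rfl fun g hg => ?_
  have hga : g a = 0 := by_contra fun h => ha ((mem_piAntidiag.1 hg).2 a h)
  rw [prod_cons]
  congr 1
  · simp [hga]
  · refine prod_congr rfl fun i hi => ?_
    simp [ne_of_mem_of_not_mem hi ha]

lemma completeHomogeneousOn_insert_succ {a : ι} {s : Finset ι} (ha : a ∉ s) (r : ℕ) :
    completeHomogeneousOn x (insert a s) (r + 1) =
      x a * completeHomogeneousOn x (insert a s) r + completeHomogeneousOn x s (r + 1) := by
  rw [completeHomogeneousOn_insert x ha, completeHomogeneousOn_insert x ha,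
    Nat.antidiagonal_succ, sum_cons, sum_map, mul_sum, add_comm]
  simp [pow_succ, mul_assoc, mul_left_comm]

lemma completeHomogeneousOn_singleton (a : ι) (r : ℕ) :
    completeHomogeneousOn x {a} r = x a ^ r := by
  induction r with
  | zero => simp
  | succ r ih =>
    rw [← insert_empty, completeHomogeneousOn_insert_succ x (notMem_empty a), insert_empty, ih]
    simp [pow_succ, mul_comm]

end CommSemiring

section CommRing

variable [CommRing R] (x : ι → R)

lemma completeHomogeneousOn_insert_sub_insert {a b : ι} {s : Finset ι} (ha : a ∉ s) (hb : b ∉ s)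
    (hab : a ≠ b) (r : ℕ) :
    completeHomogeneousOn x (insert a s) (r + 1) - completeHomogeneousOn x (insert b s) (r + 1) =
      (x a - x b) * completeHomogeneousOn x (insert a (insert b s)) r := by
  have expand_a := completeHomogeneousOn_insert_succ x (s := insert b s) (a := a)
    (by simp [hab, ha]) r
  have expand_b := completeHomogeneousOn_insert_succ x (s := insert a s) (a := b)
    (by simp [hab.symm, hb]) r
  rw [insert_comm] at expand_b
  linear_combination expand_a - expand_b

lemma completeHomogeneous_eq_completeHomogeneousOn_univ {n : ℕ} (x : Fin n → R) (r : ℕ) :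
    completeHomogeneous n x r = completeHomogeneousOn x univ r := by
  rw [completeHomogeneous, completeHomogeneousOn, ← map_sym_eq_piAntidiag, sum_map]
  refine sum_congr rfl fun m _ => ?_
  rw [prod_multiset_map_count]
  refine prod_subset (subset_univ _) fun i _ hi => ?_
  rw [Multiset.count_eq_zero_of_notMem (by simpa using hi), pow_zero]

noncomputable def shiftedCompleteHomogeneousOn (s : Finset ι) (k : ℕ) : R :=
  if #s ≤ k + 1 then completeHomogeneousOn x s (k + 1 - #s) else 0

lemma sub_mul_shiftedCompleteHomogeneousOn {s : Finset ι} {a b : ι} (ha : a ∈ s)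
    (hb : b ∈ s) (hab : a ≠ b) (k : ℕ) :
    (x a - x b) * shiftedCompleteHomogeneousOn x s k =
      shiftedCompleteHomogeneousOn x (s.erase b) k -
        shiftedCompleteHomogeneousOn x (s.erase a) k := by
  obtain ⟨t, hat, hbt, rfl⟩ := exists_eq_insert_insert_of_mem ha hb hab
  have hbt' : b ∉ insert a t := by simp [hab.symm, hbt]
  have hat' : a ∉ insert b t := by simp [hab, hat]
  rw [erase_insert hat', insert_comm, erase_insert hbt', insert_comm]
  simp only [shiftedCompleteHomogeneousOn, card_insert_of_notMem hat', card_insert_of_notMem hat,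
    card_insert_of_notMem hbt]
  rcases lt_trichotomy k (#t) with hk | rfl | hk
  · simp [show ¬#t + 1 + 1 ≤ k + 1 by omega, show ¬#t + 1 ≤ k + 1 by omega]
  · simp
  · obtain ⟨r, rfl⟩ := Nat.exists_eq_add_of_lt hk
    simp only [show #t + 1 + 1 ≤ #t + r + 1 + 1 by omega, show #t + 1 ≤ #t + r + 1 + 1 by omega,
      if_true, show #t + r + 1 + 1 - (#t + 1) = r + 1 by omega,
      show #t + r + 1 + 1 - (#t + 1 + 1) = r by omega]
    exact (completeHomogeneousOn_insert_sub_insert x hat hbt hab r).symm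

end CommRing

end CompleteHomogeneousOn

section DividedDifference

variable {K ι : Type*} [Field K] [DecidableEq ι]

noncomputable def dividedDifference (x v : ι → K) (s : Finset ι) : K :=
  ∑ i ∈ s, v i / ∏ j ∈ s.erase i, (x i - x j)

lemma dividedDifference_erase {x : ι → K} {s : Finset ι} (hx : Set.InjOn x s) (v : ι → K)
    {c : ι} (hc : c ∈ s) :
    dividedDifference x v (s.erase c) = dividedDifference x (fun i => (x i - x c) * v i) s := by
  rw [dividedDifference, dividedDifference, ← add_sum_erase s _ hc, sub_self, zero_mul, zero_div,
    zero_add]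
  refine sum_congr rfl fun i hi => ?_
  obtain ⟨hic, his⟩ := mem_erase.1 hi
  have hxic : x i - x c ≠ 0 := sub_ne_zero.2 fun h => hic (hx his hc h)
  rw [← mul_prod_erase (s.erase i) _ (mem_erase.2 ⟨Ne.symm hic, hc⟩), erase_right_comm,
    mul_div_mul_left _ _ hxic]

lemma sub_mul_dividedDifference {x : ι → K} {s : Finset ι} (hx : Set.InjOn x s) (v : ι → K)
    {a b : ι} (ha : a ∈ s) (hb : b ∈ s) :
    (x a - x b) * dividedDifference x v s =
      dividedDifference x v (s.erase b) - dividedDifference x v (s.erase a) := by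
  rw [dividedDifference_erase hx v ha, dividedDifference_erase hx v hb, dividedDifference,
    dividedDifference, dividedDifference, mul_sum, ← sum_sub_distrib]
  refine sum_congr rfl fun i _ => ?_
  ring

lemma eq_of_sub_mul_eq_sub_erase {x : ι → K} {Φ Ψ : Finset ι → K}
    (hΦ : ∀ (s : Finset ι) a b, Set.InjOn x s → a ∈ s → b ∈ s → a ≠ b →
      (x a - x b) * Φ s = Φ (s.erase b) - Φ (s.erase a))
    (hΨ : ∀ (s : Finset ι) a b, Set.InjOn x s → a ∈ s → b ∈ s → a ≠ b →
      (x a - x b) * Ψ s = Ψ (s.erase b) - Ψ (s.erase a))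
    (hsmall : ∀ s : Finset ι, #s ≤ 1 → Φ s = Ψ s) {s : Finset ι} (hs : Set.InjOn x s) :
    Φ s = Ψ s := by
  induction s using strongInduction with
  | H s ih =>
    rcases le_or_gt #s 1 with hle | hlt
    · exact hsmall s hle
    obtain ⟨a, ha, b, hb, hab⟩ := one_lt_card.1 hlt
    have hxab : x a - x b ≠ 0 := sub_ne_zero.2 fun h => hab (hs ha hb h)
    have ih_erase {c : ι} (hc : c ∈ s) : Φ (s.erase c) = Ψ (s.erase c) :=
      ih _ (erase_ssubset hc) (hs.mono (coe_subset.2 (erase_subset c s)))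
    refine mul_left_cancel₀ hxab ?_
    rw [hΦ s a b hs ha hb hab, hΨ s a b hs ha hb hab, ih_erase ha, ih_erase hb]

lemma dividedDifference_pow_of_card_le_one (x : ι → K) {s : Finset ι} (hs : #s ≤ 1) (k : ℕ) :
    dividedDifference x (fun i => x i ^ k) s = shiftedCompleteHomogeneousOn x s k := by
  rcases s.eq_empty_or_nonempty with rfl | ⟨a, ha⟩
  · simp [dividedDifference, shiftedCompleteHomogeneousOn]
  · obtain rfl : s = {a} :=
      eq_singleton_iff_unique_mem.2 ⟨ha, fun b hb => card_le_one.1 hs b hb a ha⟩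
    simp [dividedDifference, shiftedCompleteHomogeneousOn, completeHomogeneousOn_singleton]

theorem dividedDifference_pow {x : ι → K} {s : Finset ι} (hs : Set.InjOn x s) (k : ℕ) :
    dividedDifference x (fun i => x i ^ k) s = shiftedCompleteHomogeneousOn x s k :=
  eq_of_sub_mul_eq_sub_erase (fun _ _ _ ht ha hb _ => sub_mul_dividedDifference ht _ ha hb)
    (fun _ _ _ _ ha hb hab => sub_mul_shiftedCompleteHomogeneousOn x ha hb hab k)
    (fun _ ht => dividedDifference_pow_of_card_le_one x ht k) hs

end DividedDifference

theorem interpolation_identity_general {F : Type*} [Field F] (n : ℕ)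
    (x : Fin n → F) (hx : Function.Injective x) (k : ℕ) :
    ∑ i : Fin n, x i ^ k / ∏ j ∈ Finset.univ.erase i, (x i - x j) =
      (if n ≤ k + 1 then completeHomogeneous n x (k + 1 - n) else 0) := by
  have h := dividedDifference_pow hx.injOn (s := univ) k
  rw [dividedDifference, shiftedCompleteHomogeneousOn, card_univ, Fintype.card_fin] at h
  rw [h, completeHomogeneous_eq_completeHomogeneousOn_univ]

/-- Interpolation identity (Waring/Louck/Chen): for pairwise distinct `x_1, …, x_n` in a
field and any `k ≥ 0`, `∑ i, x i ^ k / ∏_{j ≠ i} (x i - x j) = h_{k - n + 1}(x)`,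
with the convention that `h_r = 0` for `r < 0` (and `h_0 = 1`). -/
theorem interpolation_identity {F : Type*} [Field F] (n : ℕ) (hn : 1 ≤ n)
    (x : Fin n → F) (hx : Function.Injective x) (k : ℕ) :
    ∑ i : Fin n, x i ^ k / ∏ j ∈ Finset.univ.erase i, (x i - x j) =
      (if n ≤ k + 1 then completeHomogeneous n x (k + 1 - n) else 0) :=
  interpolation_identity_general n x hx k
end

section
/- Let a, c be real numbers with b := a + c, and suppose |a|, |b|, |c| ≥ 1 with none of the square roots being imaginary (i.e. 1 - 1/a² ≥ 0 etc.). Define the 6×6 matrices S (block diagonal with 2×2 reflection blocks for parameters a, b, c) and T (the matrix obtained by permuting basis vectors 2↔3 and 4↔6 and using parameters c, b, a as in Young's orthogonal form). Then (S T)³ = I. -/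
/-!
Since `S` and `T` are involutions, `(S T)³ = 1` is equivalent to the braid relation
`S T S = T S T`. Writing `x, y, z` for the diagonal entries `1/a, 1/b, 1/c` and `p, q, r` for the
square roots, every entry of `S T S - T S T` vanishes modulo `x² + p² = 1`, `y² + q² = 1`,
`z² + r² = 1` and `x z = y (x + z)`; the last relation is `b = a + c` divided by `a b c`.
-/

open Matrix

noncomputable def reflEntryInv (x : ℝ) : ℝ := 1 / x

noncomputable def reflEntrySqrt (x : ℝ) : ℝ := Real.sqrt (1 - 1 / x ^ 2)

theorem pow_three_eq_one_of_mul_self_of_braid {M : Type*} [Monoid M] {s t : M}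
    (hs : s * s = 1) (ht : t * t = 1) (hst : s * t * s = t * s * t) : (s * t) ^ 3 = 1 := by
  calc (s * t) ^ 3 = s * t * s * (t * s * t) := by
        simp only [pow_succ, pow_zero, one_mul, mul_assoc]
    _ = s * t * s * (s * t * s) := by rw [hst]
    _ = 1 := by simp only [mul_assoc, ← mul_assoc s s, hs, one_mul, ← mul_assoc t t, ht]

section YoungMatrices

variable (x y z p q r : ℝ)

def youngS : Matrix (Fin 6) (Fin 6) ℝ :=
  !![x, p, 0, 0, 0, 0;
     p, -x, 0, 0, 0, 0;
     0, 0, y, q, 0, 0;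
     0, 0, q, -y, 0, 0;
     0, 0, 0, 0, z, r;
     0, 0, 0, 0, r, -z]

def youngT : Matrix (Fin 6) (Fin 6) ℝ :=
  !![z, 0, r, 0, 0, 0;
     0, y, 0, 0, q, 0;
     r, 0, -z, 0, 0, 0;
     0, 0, 0, x, 0, p;
     0, q, 0, 0, -y, 0;
     0, 0, 0, p, 0, -x]

variable {x y z p q r}

theorem youngS_mul_self (hp : x ^ 2 + p ^ 2 = 1) (hq : y ^ 2 + q ^ 2 = 1)
    (hr : z ^ 2 + r ^ 2 = 1) :
    youngS x y z p q r * youngS x y z p q r = 1 := by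
  ext i j
  fin_cases i <;> fin_cases j <;>
    simp only [youngS, mul_apply, of_apply, cons_val, Fin.sum_univ_six, one_apply,
      Fin.reduceFinMk, Fin.zero_eta, Fin.mk_one] <;> grind

theorem youngT_mul_self (hp : x ^ 2 + p ^ 2 = 1) (hq : y ^ 2 + q ^ 2 = 1)
    (hr : z ^ 2 + r ^ 2 = 1) :
    youngT x y z p q r * youngT x y z p q r = 1 := by
  ext i j
  fin_cases i <;> fin_cases j <;>
    simp only [youngT, mul_apply, of_apply, cons_val, Fin.sum_univ_six, one_apply,
      Fin.reduceFinMk, Fin.zero_eta, Fin.mk_one] <;> grind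

theorem youngS_mul_youngT_mul_youngS (hp : x ^ 2 + p ^ 2 = 1) (hq : y ^ 2 + q ^ 2 = 1)
    (hr : z ^ 2 + r ^ 2 = 1) (hxyz : x * z = y * (x + z)) :
    youngS x y z p q r * youngT x y z p q r * youngS x y z p q r =
      youngT x y z p q r * youngS x y z p q r * youngT x y z p q r := by
  ext i j
  fin_cases i <;> fin_cases j <;>
    simp only [youngS, youngT, mul_apply, of_apply, cons_val, Fin.sum_univ_six,
      Fin.reduceFinMk, Fin.zero_eta, Fin.mk_one] <;> grind

theorem youngS_mul_youngT_pow_three (hp : x ^ 2 + p ^ 2 = 1) (hq : y ^ 2 + q ^ 2 = 1)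
    (hr : z ^ 2 + r ^ 2 = 1) (hxyz : x * z = y * (x + z)) :
    (youngS x y z p q r * youngT x y z p q r) ^ 3 = 1 :=
  pow_three_eq_one_of_mul_self_of_braid (youngS_mul_self hp hq hr) (youngT_mul_self hp hq hr)
    (youngS_mul_youngT_mul_youngS hp hq hr hxyz)

end YoungMatrices

theorem reflEntryInv_sq_add_reflEntrySqrt_sq {x : ℝ} (hx : 1 ≤ |x|) :
    reflEntryInv x ^ 2 + reflEntrySqrt x ^ 2 = 1 := by
  have hx2 : 1 ≤ x ^ 2 := (one_le_sq_iff_one_le_abs x).mpr hx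
  rw [reflEntryInv, reflEntrySqrt,
    Real.sq_sqrt (sub_nonneg.mpr (div_le_one_of_le₀ hx2 (sq_nonneg x)))]
  ring

theorem reflEntryInv_mul_reflEntryInv {a c : ℝ} (ha : a ≠ 0) (hc : c ≠ 0)
    (hac : a + c ≠ 0) :
    reflEntryInv a * reflEntryInv c =
      reflEntryInv (a + c) * (reflEntryInv a + reflEntryInv c) := by
  simp only [reflEntryInv]
  field_simp
  ring

/-- Braid relation `(σ_i σ_{i+1})³ = 1` in Young's orthogonal form: with `b = a + c`
(the axial-distance relation) and `|a|, |b|, |c| ≥ 1`, the 6×6 matrices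
`S = diag(R(a), R(b), R(c))` and `T` (the permuted version with parameters `c, b, a`)
satisfy `(S T)³ = I`. -/
theorem young_braid_relation (a c : ℝ) (b : ℝ) (hb : b = a + c)
    (ha : 1 ≤ |a|) (hbb : 1 ≤ |b|) (hc : 1 ≤ |c|) :
    let f := reflEntryInv
    let g := reflEntrySqrt
    let S : Matrix (Fin 6) (Fin 6) ℝ :=
      !![f a, g a, 0, 0, 0, 0;
         g a, -f a, 0, 0, 0, 0;
         0, 0, f b, g b, 0, 0;
         0, 0, g b, -f b, 0, 0;
         0, 0, 0, 0, f c, g c;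
         0, 0, 0, 0, g c, -f c]
    let T : Matrix (Fin 6) (Fin 6) ℝ :=
      !![f c, 0, g c, 0, 0, 0;
         0, f b, 0, 0, g b, 0;
         g c, 0, -f c, 0, 0, 0;
         0, 0, 0, f a, 0, g a;
         0, g b, 0, 0, -f b, 0;
         0, 0, 0, g a, 0, -f a]
    (S * T) ^ 3 = 1 := by
  subst hb
  have hne {x : ℝ} (hx : 1 ≤ |x|) : x ≠ 0 := abs_pos.mp (one_pos.trans_le hx)
  exact youngS_mul_youngT_pow_three (reflEntryInv_sq_add_reflEntrySqrt_sq ha)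
    (reflEntryInv_sq_add_reflEntrySqrt_sq hbb) (reflEntryInv_sq_add_reflEntrySqrt_sq hc)
    (reflEntryInv_mul_reflEntryInv (hne ha) (hne hc) (hne hbb))
end

section
/- Let λ be a Young diagram with at most d rows, obtained by removing one cell x from a Young diagram μ ⊢ p with at most d rows. Then d + cont(x) = p · (d_λ / d_μ) · (m_μ / m_λ), where cont(x) = j - i is the content of cell x = (i,j), d_ν is the number of standard Young tableaux of shape ν, and m_ν is the number of semistandard Young tableaux of shape ν with entries in {1, …, d}. -/
/-- The number of standard Young tableaux of shape `μ`, encoded as the number of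
saturated chains `⊥ = T 0 ⊆ T 1 ⊆ ⋯ ⊆ T |μ| = μ` in the Young lattice in which each
step adds exactly one cell. -/
noncomputable def sytCount (μ : YoungDiagram) : ℕ :=
  Nat.card {T : Fin (μ.card + 1) → YoungDiagram //
    T 0 = ⊥ ∧ T (Fin.last μ.card) = μ ∧
    ∀ i : Fin μ.card, T i.castSucc ≤ T i.succ ∧
      (T i.succ).card = (T i.castSucc).card + 1}

/-- The number of semistandard Young tableaux of shape `μ` with entries in
`{0, 1, …, d-1}` (i.e. `d` allowed symbols). -/
noncomputable def ssytCount (μ : YoungDiagram) (d : ℕ) : ℕ :=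
  Nat.card {T : SemistandardYoungTableau μ // ∀ i j : ℕ, (i, j) ∈ μ → T i j < d}

/-- A cell `c` is addable to `μ` if it is not in `μ` and adding it yields a valid
Young diagram. -/
def IsAddableCell (μ : YoungDiagram) (c : ℕ × ℕ) : Prop :=
  c ∉ μ ∧ ∃ ν : YoungDiagram, ν.cells = insert c μ.cells

/-- A cell `c` is removable from `μ` if it is in `μ` and removing it yields a valid
Young diagram. -/
def IsRemovableCell (μ : YoungDiagram) (c : ℕ × ℕ) : Prop :=
  c ∈ μ ∧ ∃ ν : YoungDiagram, ν.cells = μ.cells.erase c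

/-- The content `j - i` of a cell `(i, j)`, as a rational number. -/
def contQ (c : ℕ × ℕ) : ℚ := (c.2 : ℚ) - (c.1 : ℚ)

/-!
The heart of the proof is the recursion
`|μ| · m_μ = ∑_{x removable} (d + cont x) · m_{μ \ x}`, proved by induction on `d`: deleting the
entries equal to `d` from a tableau with entries `≤ d` leaves a tableau on the inner shape `κ` of a
horizontal strip `μ / κ`, and after expanding both sides over `κ` the coefficient of `m_κ` becomes
an identity between the interlacing row lengths of `κ` and `μ`. Together with the branching rule
`d_μ = ∑_x d_{μ \ x}`, induction on `|μ|` gives `|μ|! · m_μ = d_μ · ∏_{c ∈ μ} (d + cont c)`, and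
the theorem is the quotient of these identities for `μ` and `λ = μ \ x`.
-/

open Finset Function

namespace YoungDiagram

variable {μ ν κ : YoungDiagram} {c x y : ℕ × ℕ}

lemma rowLen_mono (h : ν ≤ μ) (i : ℕ) : ν.rowLen i ≤ μ.rowLen i := by
  by_contra! hlt
  exact lt_irrefl _ (mem_iff_lt_rowLen.mp (h (mem_iff_lt_rowLen.mpr hlt)))

lemma le_iff_rowLen_le : ν ≤ μ ↔ ∀ i, ν.rowLen i ≤ μ.rowLen i :=
  ⟨rowLen_mono, fun h ⟨i, _⟩ hc =>
    mem_iff_lt_rowLen.mpr ((mem_iff_lt_rowLen.mp hc).trans_le (h i))⟩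

lemma rowLen_eq_iff {i k : ℕ} : μ.rowLen i = k ↔ ∀ j, (i, j) ∈ μ ↔ j < k := by
  simp only [mem_iff_lt_rowLen]
  exact ⟨fun h j => by rw [h], fun h =>
    le_antisymm (le_of_forall_lt fun j => (h j).mp) (le_of_forall_lt fun j => (h j).mpr)⟩

lemma fst_lt_colLen_zero (hc : c ∈ μ) : c.1 < μ.colLen 0 :=
  mem_iff_lt_colLen.mp (μ.up_left_mem le_rfl (Nat.zero_le _) hc)

lemma colLen_zero_mono (h : ν ≤ μ) : ν.colLen 0 ≤ μ.colLen 0 := by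
  by_contra! hlt
  exact lt_irrefl _ (fst_lt_colLen_zero (h (mem_iff_lt_colLen.mpr hlt)))

lemma rowLen_eq_zero_of_colLen_zero_le {i : ℕ} (h : μ.colLen 0 ≤ i) : μ.rowLen i = 0 := by
  by_contra hne
  have := fst_lt_colLen_zero (mem_iff_lt_rowLen.mpr (Nat.pos_of_ne_zero hne) : (i, 0) ∈ μ)
  omega

lemma card_eq_sum_rowLen {N : ℕ} (hN : μ.colLen 0 ≤ N) :
    μ.card = ∑ i ∈ range N, μ.rowLen i := by
  rw [YoungDiagram.card, card_eq_sum_card_fiberwise (f := Prod.fst)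
    fun c hc => mem_range.mpr ((fst_lt_colLen_zero hc).trans_le hN)]
  exact sum_congr rfl fun i _ => (μ.rowLen_eq_card).symm

lemma card_eq_zero : μ.card = 0 ↔ μ = ⊥ := by
  rw [YoungDiagram.card, Finset.card_eq_zero, YoungDiagram.ext_iff, cells_bot]

lemma zero_zero_mem (h : μ ≠ ⊥) : ((0, 0) : ℕ × ℕ) ∈ μ := by
  obtain ⟨c, hc⟩ : μ.cells.Nonempty := by
    rw [nonempty_iff_ne_empty, ← cells_bot, Ne, ← YoungDiagram.ext_iff]
    exact h
  exact μ.up_left_mem (Nat.zero_le _) (Nat.zero_le _) hc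

lemma finite_Iic (μ : YoungDiagram) : (Set.Iic μ).Finite :=
  (μ.cells.powerset.finite_toSet.preimage
    (Injective.injOn fun _ _ h => YoungDiagram.ext h)).subset fun _ hν =>
      mem_coe.mpr (mem_powerset.mpr hν)

noncomputable def subdiagrams (μ : YoungDiagram) : Finset YoungDiagram := μ.finite_Iic.toFinset

@[simp] lemma mem_subdiagrams : ν ∈ μ.subdiagrams ↔ ν ≤ μ := by
  simp [subdiagrams]

def removableCells (μ : YoungDiagram) : Finset (ℕ × ℕ) :=
  μ.cells.filter fun c => (c.1 + 1, c.2) ∉ μ ∧ (c.1, c.2 + 1) ∉ μ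

lemma mem_removableCells :
    x ∈ μ.removableCells ↔ x ∈ μ ∧ (x.1 + 1, x.2) ∉ μ ∧ (x.1, x.2 + 1) ∉ μ :=
  mem_filter

lemma mem_removableCells_iff_rowLen :
    x ∈ μ.removableCells ↔ x.2 + 1 = μ.rowLen x.1 ∧ μ.rowLen (x.1 + 1) < μ.rowLen x.1 := by
  rw [mem_removableCells, mem_iff_lt_rowLen, mem_iff_lt_rowLen, mem_iff_lt_rowLen]
  have := μ.rowLen_anti x.1 (x.1 + 1) (Nat.le_succ _)
  omega

lemma mem_removableCells_of_isLowerSet_erase (hx : x ∈ μ)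
    (h : IsLowerSet (↑(μ.cells.erase x) : Set (ℕ × ℕ))) : x ∈ μ.removableCells := by
  have key : ∀ c ∈ μ, x ≤ c → c ≠ x → False := fun c hc hxc hne =>
    (mem_erase.mp (h hxc (mem_erase.mpr ⟨hne, hc⟩))).1 rfl
  refine mem_removableCells.mpr ⟨hx, fun hc => key _ hc ?_ ?_, fun hc => key _ hc ?_ ?_⟩ <;>
    simp [Prod.le_def, Prod.ext_iff]

lemma isLowerSet_erase (hx : x ∈ μ.removableCells) :
    IsLowerSet (↑(μ.cells.erase x) : Set (ℕ × ℕ)) := by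
  obtain ⟨-, hdown, hright⟩ := mem_removableCells.mp hx
  intro c c' hle hc
  rw [mem_coe, mem_erase] at hc ⊢
  refine ⟨fun hcx => ?_, μ.isLowerSet hle hc.2⟩
  rw [hcx] at hle
  have : x.1 < c.1 ∨ x.2 < c.2 := by
    by_contra! h
    exact hc.1 (Prod.ext (le_antisymm h.1 hle.1) (le_antisymm h.2 hle.2))
  rcases this with h | h
  · exact hdown (μ.up_left_mem h hle.2 hc.2)
  · exact hright (μ.up_left_mem hle.1 h hc.2)

/-- `μ` with the cell `x` removed; meaningful when `x ∈ μ.removableCells`. -/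
noncomputable def eraseCell (μ : YoungDiagram) (x : ℕ × ℕ) : YoungDiagram :=
  open Classical in
  if h : IsLowerSet (↑(μ.cells.erase x) : Set (ℕ × ℕ)) then ⟨μ.cells.erase x, h⟩ else μ

section eraseCell

variable (hx : x ∈ μ.removableCells)
include hx

lemma cells_eraseCell : (μ.eraseCell x).cells = μ.cells.erase x := by
  rw [eraseCell, dif_pos (isLowerSet_erase hx)]

lemma mem_eraseCell : c ∈ μ.eraseCell x ↔ c ≠ x ∧ c ∈ μ := by
  rw [← mem_cells, cells_eraseCell hx, mem_erase, mem_cells]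

lemma eraseCell_le : μ.eraseCell x ≤ μ := fun _ hc => ((mem_eraseCell hx).mp hc).2

lemma card_eraseCell : (μ.eraseCell x).card + 1 = μ.card := by
  rw [YoungDiagram.card, cells_eraseCell hx]
  exact card_erase_add_one (mem_removableCells.mp hx).1

lemma prod_cells_eq_mul_prod_cells_eraseCell {β : Type*} [CommMonoid β] (F : ℕ × ℕ → β) :
    ∏ c ∈ μ.cells, F c = F x * ∏ c ∈ (μ.eraseCell x).cells, F c := by
  rw [cells_eraseCell hx, mul_prod_erase _ _ (mem_removableCells.mp hx).1]

lemma rowLen_eraseCell : (μ.eraseCell x).rowLen = update μ.rowLen x.1 x.2 := by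
  have hlen := (mem_removableCells_iff_rowLen.mp hx).1
  funext i
  rw [rowLen_eq_iff]
  intro j
  rw [mem_eraseCell hx, mem_iff_lt_rowLen, update_apply, Ne, Prod.ext_iff]
  split_ifs with h
  · subst h
    simp only [true_and]
    omega
  · simp [h]

end eraseCell

lemma eraseCell_injOn : Set.InjOn μ.eraseCell μ.removableCells := fun x hx x' hx' h =>
  (erase_inj _ (mem_removableCells.mp hx).1).mp <| by
    rw [← cells_eraseCell hx, ← cells_eraseCell hx', h]

lemma exists_eraseCell_eq (h : ν ≤ μ) (hcard : ν.card + 1 = μ.card) :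
    ∃ x ∈ μ.removableCells, μ.eraseCell x = ν := by
  obtain ⟨x, hx⟩ : ∃ x, μ.cells \ ν.cells = {x} := card_eq_one.mp <| by
    rw [card_sdiff_of_subset (cells_subset_iff.mpr h)]
    exact Nat.sub_eq_of_eq_add' hcard.symm
  have hxμ : x ∈ μ := (mem_sdiff.mp (hx ▸ mem_singleton_self x)).1
  have hcells : μ.cells.erase x = ν.cells := by
    rw [erase_eq, ← hx, Finset.sdiff_sdiff_eq_self (cells_subset_iff.mpr h)]
  have hrem := mem_removableCells_of_isLowerSet_erase hxμ (hcells ▸ ν.isLowerSet)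
  exact ⟨x, hrem, YoungDiagram.ext (by rw [cells_eraseCell hrem, hcells])⟩

lemma removableCells_nonempty (h : μ ≠ ⊥) : μ.removableCells.Nonempty := by
  obtain ⟨x, hx, hmax⟩ := exists_max_image μ.cells (fun c => c.1 + c.2)
    ⟨_, (mem_cells _).mpr (zero_zero_mem h)⟩
  exact ⟨x, mem_removableCells.mpr ⟨hx, fun hc => by have := hmax _ hc; omega,
    fun hc => by have := hmax _ hc; omega⟩⟩

lemma isLowerSet_insert (hy : IsAddableCell κ y) :
    IsLowerSet (↑(insert y κ.cells) : Set (ℕ × ℕ)) := by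
  obtain ⟨ν, hν⟩ := hy.2
  rw [← hν]
  exact ν.isLowerSet

lemma isLowerSet_insert_mk_rowLen {i : ℕ} (hrow : i = 0 ∨ κ.rowLen i < κ.rowLen (i - 1)) :
    IsLowerSet (↑(insert (i, κ.rowLen i) κ.cells) : Set (ℕ × ℕ)) := by
  intro c c' hle hc
  rw [mem_coe, mem_insert] at hc ⊢
  rcases hc with rfl | hc
  · by_cases heq : c' = (i, κ.rowLen i)
    · exact Or.inl heq
    right
    rw [mem_cells, mem_iff_lt_rowLen]
    obtain ⟨h1, h2⟩ : c'.1 ≤ i ∧ c'.2 ≤ κ.rowLen i := hle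
    rcases h1.lt_or_eq with h | h
    · have := κ.rowLen_anti c'.1 (i - 1) (by omega)
      omega
    · have : c'.2 ≠ κ.rowLen i := fun h2' => heq (Prod.ext h h2')
      rw [h]
      omega
  · exact Or.inr (κ.isLowerSet hle hc)

lemma isAddableCell_iff_rowLen :
    IsAddableCell κ y ↔ y.2 = κ.rowLen y.1 ∧ (y.1 = 0 ∨ κ.rowLen y.1 < κ.rowLen (y.1 - 1)) := by
  constructor
  · intro hy
    have hlow := isLowerSet_insert hy
    have mem : ∀ c ≤ y, c ≠ y → c ∈ κ := fun c hc hne =>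
      (mem_insert.mp (hlow hc (mem_insert_self y _))).resolve_left hne
    have hge : κ.rowLen y.1 ≤ y.2 := not_lt.mp (mt mem_iff_lt_rowLen.mpr hy.1)
    refine ⟨le_antisymm ?_ hge, ?_⟩
    · by_contra! hlt
      have := mem_iff_lt_rowLen.mp (mem (y.1, y.2 - 1) (by simp [Prod.le_def])
        (by simp [Prod.ext_iff]; omega))
      omega
    · by_contra! h
      have := mem_iff_lt_rowLen.mp (mem (y.1 - 1, y.2) (by simp [Prod.le_def])
        (by simp [Prod.ext_iff]; omega))
      omega
  · obtain ⟨i, j⟩ := y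
    rintro ⟨hj, hrow⟩
    dsimp only at hj hrow
    subst hj
    exact ⟨fun h => lt_irrefl _ (mem_iff_lt_rowLen.mp h),
      ⟨_, isLowerSet_insert_mk_rowLen hrow⟩, rfl⟩

/-- `κ` with the cell `y` added; meaningful when `IsAddableCell κ y`. -/
noncomputable def insertCell (κ : YoungDiagram) (y : ℕ × ℕ) : YoungDiagram :=
  open Classical in
  if h : IsLowerSet (↑(insert y κ.cells) : Set (ℕ × ℕ)) then ⟨insert y κ.cells, h⟩ else κ

section insertCell

variable (hy : IsAddableCell κ y)
include hy

lemma cells_insertCell : (κ.insertCell y).cells = insert y κ.cells := by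
  rw [insertCell, dif_pos (isLowerSet_insert hy)]

lemma mem_insertCell : c ∈ κ.insertCell y ↔ c = y ∨ c ∈ κ := by
  rw [← mem_cells, cells_insertCell hy, mem_insert, mem_cells]

lemma rowLen_insertCell : (κ.insertCell y).rowLen = update κ.rowLen y.1 (y.2 + 1) := by
  have hy2 := (isAddableCell_iff_rowLen.mp hy).1
  funext i
  rw [rowLen_eq_iff]
  intro j
  rw [mem_insertCell hy, mem_iff_lt_rowLen, update_apply, Prod.ext_iff]
  split_ifs with h
  · subst h
    simp only [true_and]
    omega
  · simp [h]

lemma mem_removableCells_insertCell : y ∈ (κ.insertCell y).removableCells :=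
  mem_removableCells_of_isLowerSet_erase ((mem_insertCell hy).mpr (Or.inl rfl)) <| by
    rw [cells_insertCell hy, erase_insert hy.1]
    exact κ.isLowerSet

lemma eraseCell_insertCell : (κ.insertCell y).eraseCell y = κ :=
  YoungDiagram.ext <| by
    rw [cells_eraseCell (mem_removableCells_insertCell hy), cells_insertCell hy,
      erase_insert hy.1]

end insertCell

lemma isAddableCell_eraseCell (hx : x ∈ μ.removableCells) : IsAddableCell (μ.eraseCell x) x :=
  ⟨fun h => ((mem_eraseCell hx).mp h).1 rfl,
    μ, by rw [cells_eraseCell hx, insert_erase (mem_removableCells.mp hx).1]⟩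

lemma insertCell_eraseCell (hx : x ∈ μ.removableCells) : (μ.eraseCell x).insertCell x = μ :=
  YoungDiagram.ext <| by
    rw [cells_insertCell (isAddableCell_eraseCell hx), cells_eraseCell hx,
      insert_erase (mem_removableCells.mp hx).1]

/-- For row lengths, `κ.rowLen` interlaces `μ.rowLen` exactly when `μ / κ` is a horizontal
strip. -/
def Interlaces (g f : ℕ → ℕ) : Prop := ∀ t, g t ≤ f t ∧ f (t + 1) ≤ g t

def AddableInterlacing (g f : ℕ → ℕ) (i : ℕ) : Prop :=
  (i = 0 ∨ g i < g (i - 1)) ∧ Interlaces (update g i (g i + 1)) f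

def RemovableInterlacing (g f : ℕ → ℕ) (i : ℕ) : Prop :=
  f (i + 1) < f i ∧ Interlaces g (update f i (f i - 1))

section Interlacing

variable {f g : ℕ → ℕ} {i : ℕ}

lemma eq_add_one_of_not_interlaces (hns : ¬ Interlaces g f) (hgf : ∀ t, g t ≤ f t)
    (hfg : ∀ t ≠ i, f (t + 1) ≤ g t) (hi : f (i + 1) ≤ g i + 1) : f (i + 1) = g i + 1 := by
  by_contra hne
  exact hns fun t => ⟨hgf t, by rcases eq_or_ne t i with rfl | ht <;> [omega; exact hfg t ht]⟩

lemma addableInterlacing_iff_of_interlaces (h : Interlaces g f) :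
    AddableInterlacing g f i ↔ g i < f i := by
  constructor
  · rintro ⟨-, h'⟩
    simpa using (h' i).1
  · intro hlt
    refine ⟨?_, fun t => ?_⟩
    · rcases i with _ | i
      · exact Or.inl rfl
      · exact Or.inr (lt_of_lt_of_le hlt (h i).2)
    · have := h t
      rcases eq_or_ne t i with rfl | ht
      · simp only [update_self]
        omega
      · simpa [ht] using this

lemma removableInterlacing_iff_of_interlaces (hf : Antitone f) (h : Interlaces g f) :
    RemovableInterlacing g f i ↔ g i < f i := by
  constructor
  · rintro ⟨hlt, h'⟩
    have := (h' i).1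
    simp only [update_self] at this
    omega
  · intro hlt
    refine ⟨lt_of_le_of_lt (h i).2 hlt, fun t => ?_⟩
    have := h t
    have := hf (Nat.le_add_right t 1)
    simp only [update_apply]
    split_ifs <;> subst_vars <;> omega

lemma removableInterlacing_succ_of_addableInterlacing (hg : Antitone g) (hns : ¬ Interlaces g f)
    (h : AddableInterlacing g f i) :
    RemovableInterlacing g f (i + 1) ∧ f (i + 1) = g i + 1 := by
  obtain ⟨-, h⟩ := h
  have hgf : ∀ t, g t ≤ f t := fun t => by
    have := (h t).1
    simp only [update_apply] at this
    split_ifs at this <;> subst_vars <;> omega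
  have hfg : ∀ t ≠ i, f (t + 1) ≤ g t := fun t ht => by simpa [ht] using (h t).2
  have hi := (h i).2
  simp only [update_self] at hi
  have heq := eq_add_one_of_not_interlaces hns hgf hfg hi
  have hgi := hg (Nat.le_add_right i 1)
  refine ⟨⟨?_, fun t => ?_⟩, heq⟩
  · have := hfg (i + 1) (by omega)
    omega
  · have := hgf t
    have := hgf (i + 1)
    rcases eq_or_ne t i with rfl | ht
    · simp only [update_apply]
      split_ifs <;> omega
    · have := hfg t ht
      simp only [update_apply]
      split_ifs <;> subst_vars <;> omega

lemma addableInterlacing_of_removableInterlacing_succ (hf : Antitone f) (hns : ¬ Interlaces g f)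
    (h : RemovableInterlacing g f (i + 1)) :
    AddableInterlacing g f i ∧ f (i + 1) = g i + 1 := by
  obtain ⟨-, h⟩ := h
  have hgf : ∀ t, g t ≤ f t := fun t => by
    have := (h t).1
    simp only [update_apply] at this
    split_ifs at this <;> subst_vars <;> omega
  have hfg : ∀ t ≠ i, f (t + 1) ≤ g t := fun t ht => by simpa [ht] using (h t).2
  have hi := (h i).2
  simp only [update_self] at hi
  have heq := eq_add_one_of_not_interlaces hns hgf hfg (by omega)
  refine ⟨⟨?_, fun t => ?_⟩, heq⟩
  · rcases i with _ | i
    · exact Or.inl rfl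
    · have := hfg i (by omega)
      have := hf (Nat.le_add_right (i + 1) 1)
      exact Or.inr (by simp only [Nat.add_sub_cancel]; omega)
  · have := hgf t
    have := hf (Nat.le_add_right t 1)
    rcases eq_or_ne t i with rfl | ht
    · simp only [update_apply]
      split_ifs <;> omega
    · have := hfg t ht
      simp only [update_apply]
      split_ifs <;> subst_vars <;> omega

end Interlacing

open Classical in
/-- The coefficient identity behind `card_mul_ssytCount`, written in terms of the row lengths
`g` of `κ` and `f` of `μ`. -/
theorem interlacing_content_sum {f g : ℕ → ℕ} (hf : Antitone f) (hg : Antitone g) {N : ℕ}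
    (hN : f N = 0) (D : ℚ) :
    (if Interlaces g f then ∑ i ∈ range N, ((f i : ℚ) - g i) else 0)
        + ∑ i ∈ range N with AddableInterlacing g f i, (D + contQ (i, g i))
      = ∑ i ∈ range N with RemovableInterlacing g f i, (D + contQ (i, f i)) := by
  simp only [sum_filter, contQ]
  split_ifs with hI
  · rw [← sum_add_distrib]
    refine sum_congr rfl fun i _ => ?_
    simp only [addableInterlacing_iff_of_interlaces hI,
      removableInterlacing_iff_of_interlaces hf hI]
    split_ifs with hlt
    · ring
    · rw [le_antisymm (not_lt.mp hlt) (hI i).1]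
      ring
  · rw [zero_add]
    have hR0 : ¬ RemovableInterlacing g f 0 := fun ⟨_, h⟩ => hI fun t => by
      have := h t
      simp only [update_apply, Nat.add_one_ne_zero, if_false] at this
      split_ifs at this <;> subst_vars <;> omega
    have hRN : ¬ RemovableInterlacing g f N := fun h => by
      have := h.1
      omega
    have hshift : ∀ i, (if AddableInterlacing g f i then D + ((g i : ℚ) - i) else 0)
        = if RemovableInterlacing g f (i + 1) then D + ((f (i + 1) : ℚ) - ↑(i + 1)) else 0 := by
      intro i
      by_cases hA : AddableInterlacing g f i
      · obtain ⟨hR, heq⟩ := removableInterlacing_succ_of_addableInterlacing hg hI hA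
        rw [if_pos hA, if_pos hR, heq]
        push_cast
        ring
      · have hR : ¬ RemovableInterlacing g f (i + 1) := fun hR =>
          hA (addableInterlacing_of_removableInterlacing_succ hf hI hR).1
        rw [if_neg hA, if_neg hR]
    have := (sum_range_succ' (fun i => if RemovableInterlacing g f i
      then D + ((f i : ℚ) - i) else 0) N).symm.trans (sum_range_succ _ N)
    simp only [if_neg hR0, if_neg hRN, add_zero] at this
    rw [sum_congr rfl fun i _ => hshift i, this]

open Classical in
/-- The inner shapes `κ ≤ μ` of the horizontal strips `μ / κ`. -/
noncomputable def horizontalStrips (μ : YoungDiagram) : Finset YoungDiagram :=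
  μ.subdiagrams.filter fun κ => Interlaces κ.rowLen μ.rowLen

lemma mem_horizontalStrips : κ ∈ μ.horizontalStrips ↔ Interlaces κ.rowLen μ.rowLen := by
  classical
  rw [horizontalStrips, mem_filter, mem_subdiagrams, le_iff_rowLen_le]
  exact ⟨And.right, fun h => ⟨fun t => (h t).1, h⟩⟩

lemma le_of_mem_horizontalStrips (h : κ ∈ μ.horizontalStrips) : κ ≤ μ :=
  le_iff_rowLen_le.mpr fun t => (mem_horizontalStrips.mp h t).1

lemma addableInterlacing_iff {i : ℕ} :
    AddableInterlacing κ.rowLen μ.rowLen i ↔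
      IsAddableCell κ (i, κ.rowLen i) ∧ κ.insertCell (i, κ.rowLen i) ∈ μ.horizontalStrips := by
  constructor
  · rintro ⟨hrow, hI⟩
    have hadd : IsAddableCell κ (i, κ.rowLen i) := isAddableCell_iff_rowLen.mpr ⟨rfl, hrow⟩
    exact ⟨hadd, mem_horizontalStrips.mpr (by rwa [rowLen_insertCell hadd])⟩
  · rintro ⟨hadd, hs⟩
    rw [mem_horizontalStrips, rowLen_insertCell hadd] at hs
    exact ⟨(isAddableCell_iff_rowLen.mp hadd).2, hs⟩

lemma removableInterlacing_iff {i : ℕ} :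
    RemovableInterlacing κ.rowLen μ.rowLen i ↔
      (i, μ.rowLen i - 1) ∈ μ.removableCells ∧
        κ ∈ (μ.eraseCell (i, μ.rowLen i - 1)).horizontalStrips := by
  have hrem : (i, μ.rowLen i - 1) ∈ μ.removableCells ↔ μ.rowLen (i + 1) < μ.rowLen i := by
    rw [mem_removableCells_iff_rowLen]
    dsimp only
    omega
  constructor
  · rintro ⟨hlt, hI⟩
    have hx := hrem.mpr hlt
    exact ⟨hx, mem_horizontalStrips.mpr (by rwa [rowLen_eraseCell hx])⟩
  · rintro ⟨hx, hs⟩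
    rw [mem_horizontalStrips, rowLen_eraseCell hx] at hs
    exact ⟨hrem.mp hx, hs⟩

lemma mk_rowLen_eraseCell (hx : x ∈ μ.removableCells) : (x.1, (μ.eraseCell x).rowLen x.1) = x := by
  rw [rowLen_eraseCell hx, update_self]

lemma mk_rowLen_sub_one (hx : x ∈ μ.removableCells) : (x.1, μ.rowLen x.1 - 1) = x := by
  rw [← (mem_removableCells_iff_rowLen.mp hx).1, Nat.add_sub_cancel]

section Reindexing

variable {β : Type*} [AddCommMonoid β] (F : YoungDiagram → ℕ × ℕ → β) {N : ℕ}
  (hN : μ.colLen 0 ≤ N)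
include hN

open Classical in
lemma sum_horizontalStrips_sum_removableCells :
    ∑ l ∈ μ.horizontalStrips, ∑ y ∈ l.removableCells, F (l.eraseCell y) y
      = ∑ κ ∈ μ.subdiagrams, ∑ i ∈ range N with AddableInterlacing κ.rowLen μ.rowLen i,
          F κ (i, κ.rowLen i) := by
  rw [sum_sigma', sum_sigma']
  refine sum_nbij' (fun p => ⟨p.1.eraseCell p.2, p.2.1⟩)
    (fun q => ⟨q.1.insertCell (q.2, q.1.rowLen q.2), (q.2, q.1.rowLen q.2)⟩) ?_ ?_ ?_ ?_ ?_
  · rintro ⟨l, y⟩ hp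
    obtain ⟨hl, hy⟩ := mem_sigma.mp hp
    have hyl : y ∈ l := (mem_removableCells.mp hy).1
    refine mem_sigma.mpr ⟨mem_subdiagrams.mpr ((eraseCell_le hy).trans
      (le_of_mem_horizontalStrips hl)), mem_filter.mpr ⟨mem_range.mpr ?_, ?_⟩⟩
    · exact (fst_lt_colLen_zero (le_of_mem_horizontalStrips hl hyl)).trans_le hN
    · rw [addableInterlacing_iff, mk_rowLen_eraseCell hy, insertCell_eraseCell hy]
      exact ⟨isAddableCell_eraseCell hy, hl⟩
  · rintro ⟨κ, i⟩ hq
    obtain ⟨-, hi⟩ := mem_sigma.mp hq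
    obtain ⟨hadd, hs⟩ := addableInterlacing_iff.mp (mem_filter.mp hi).2
    exact mem_sigma.mpr ⟨hs, mem_removableCells_insertCell hadd⟩
  · rintro ⟨l, y⟩ hp
    have hy := (mem_sigma.mp hp).2
    simp only [mk_rowLen_eraseCell hy, insertCell_eraseCell hy]
  · rintro ⟨κ, i⟩ hq
    have hadd := (addableInterlacing_iff.mp (mem_filter.mp (mem_sigma.mp hq).2).2).1
    simp only [eraseCell_insertCell hadd]
  · rintro ⟨l, y⟩ hp
    simp only [mk_rowLen_eraseCell (mem_sigma.mp hp).2]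

open Classical in
lemma sum_removableCells_sum_horizontalStrips :
    ∑ x ∈ μ.removableCells, ∑ κ ∈ (μ.eraseCell x).horizontalStrips, F κ x
      = ∑ κ ∈ μ.subdiagrams, ∑ i ∈ range N with RemovableInterlacing κ.rowLen μ.rowLen i,
          F κ (i, μ.rowLen i - 1) := by
  rw [sum_sigma', sum_sigma']
  refine sum_nbij' (fun p => ⟨p.2, p.1.1⟩) (fun q => ⟨(q.2, μ.rowLen q.2 - 1), q.1⟩)
    ?_ ?_ ?_ ?_ ?_
  · rintro ⟨x, κ⟩ hp
    obtain ⟨hx, hs⟩ := mem_sigma.mp hp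
    refine mem_sigma.mpr ⟨mem_subdiagrams.mpr ((le_of_mem_horizontalStrips hs).trans
      (eraseCell_le hx)), mem_filter.mpr ⟨mem_range.mpr ?_, ?_⟩⟩
    · exact (fst_lt_colLen_zero (mem_removableCells.mp hx).1).trans_le hN
    · rw [removableInterlacing_iff, mk_rowLen_sub_one hx]
      exact ⟨hx, hs⟩
  · rintro ⟨κ, i⟩ hq
    exact mem_sigma.mpr (removableInterlacing_iff.mp (mem_filter.mp (mem_sigma.mp hq).2).2)
  · rintro ⟨x, κ⟩ hp
    simp only [mk_rowLen_sub_one (mem_sigma.mp hp).1]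
  · rintro ⟨κ, i⟩ hq
    rfl
  · rintro ⟨x, κ⟩ hp
    simp only [mk_rowLen_sub_one (mem_sigma.mp hp).1]

end Reindexing

end YoungDiagram

abbrev BoundedSSYT (μ : YoungDiagram) (d : ℕ) : Type :=
  {T : SemistandardYoungTableau μ // ∀ i j, (i, j) ∈ μ → T i j < d}

namespace SemistandardYoungTableau

open YoungDiagram

variable {μ l : YoungDiagram} {d : ℕ}

lemma ext_of_mem {T T' : SemistandardYoungTableau μ} (h : ∀ i j, (i, j) ∈ μ → T i j = T' i j) :
    T = T' :=
  ext fun i j => by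
    by_cases hm : (i, j) ∈ μ
    · exact h i j hm
    · rw [T.zeros hm, T'.zeros hm]

def shapeBelow (T : SemistandardYoungTableau μ) (d : ℕ) : YoungDiagram where
  cells := μ.cells.filter fun c => T c.1 c.2 < d
  isLowerSet := by
    intro c c' hle hc
    rw [mem_coe, mem_filter] at hc ⊢
    refine ⟨μ.isLowerSet hle hc.1, lt_of_le_of_lt ?_ hc.2⟩
    calc T c'.1 c'.2 ≤ T c.1 c'.2 := T.col_weak hle.1 (μ.up_left_mem le_rfl hle.2 hc.1)
      _ ≤ T c.1 c.2 := T.row_weak_of_le hle.2 hc.1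

lemma mem_shapeBelow {T : SemistandardYoungTableau μ} {c : ℕ × ℕ} :
    c ∈ T.shapeBelow d ↔ c ∈ μ ∧ T c.1 c.2 < d :=
  mem_filter

lemma shapeBelow_mem_horizontalStrips {T : SemistandardYoungTableau μ}
    (hT : ∀ i j, (i, j) ∈ μ → T i j < d + 1) : T.shapeBelow d ∈ μ.horizontalStrips := by
  have hle : T.shapeBelow d ≤ μ := fun _ hc => (mem_shapeBelow.mp hc).1
  refine mem_horizontalStrips.mpr fun t => ⟨rowLen_mono hle t, ?_⟩
  by_contra! hlt
  have hm : (t + 1, (T.shapeBelow d).rowLen t) ∈ μ := mem_iff_lt_rowLen.mpr hlt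
  have : (t, (T.shapeBelow d).rowLen t) ∈ T.shapeBelow d :=
    mem_shapeBelow.mpr ⟨μ.up_left_mem (Nat.le_succ t) le_rfl hm,
      (T.col_strict (Nat.lt_succ_self t) hm).trans_le (Nat.lt_succ_iff.mp (hT _ _ hm))⟩
  exact lt_irrefl _ (mem_iff_lt_rowLen.mp this)

def restrictBelow (T : SemistandardYoungTableau μ) (d : ℕ) :
    SemistandardYoungTableau (T.shapeBelow d) where
  entry i j := if (i, j) ∈ T.shapeBelow d then T i j else 0
  row_weak' hj hm := by
    rw [if_pos hm, if_pos ((T.shapeBelow d).up_left_mem le_rfl hj.le hm)]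
    exact T.row_weak hj (mem_shapeBelow.mp hm).1
  col_strict' hi hm := by
    rw [if_pos hm, if_pos ((T.shapeBelow d).up_left_mem hi.le le_rfl hm)]
    exact T.col_strict hi (mem_shapeBelow.mp hm).1
  zeros' hm := if_neg hm

lemma restrictBelow_apply (T : SemistandardYoungTableau μ) (i j : ℕ) :
    T.restrictBelow d i j = if (i, j) ∈ T.shapeBelow d then T i j else 0 :=
  rfl

def extendStrip (hl : l ∈ μ.horizontalStrips) (S : SemistandardYoungTableau l)
    (hS : ∀ i j, (i, j) ∈ l → S i j < d) : SemistandardYoungTableau μ where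
  entry i j := if (i, j) ∈ l then S i j else if (i, j) ∈ μ then d else 0
  row_weak' {i j1 j2} hj hm := by
    by_cases h2 : (i, j2) ∈ l
    · rw [if_pos h2, if_pos (l.up_left_mem le_rfl hj.le h2)]
      exact S.row_weak hj h2
    · rw [if_neg h2, if_pos hm]
      split_ifs with h1
      · exact (hS _ _ h1).le
      · exact le_rfl
      · exact Nat.zero_le d
  col_strict' {i1 i2 j} hi hm := by
    have h1 : (i1, j) ∈ l := mem_iff_lt_rowLen.mpr <|
      (mem_iff_lt_rowLen.mp (μ.up_left_mem hi le_rfl hm)).trans_le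
        (mem_horizontalStrips.mp hl i1).2
    rw [if_pos h1]
    split_ifs with h2
    · exact S.col_strict hi h2
    · exact hS _ _ h1
  zeros' {i j} hm := by
    rw [if_neg fun h => hm (le_of_mem_horizontalStrips hl h), if_neg hm]

lemma extendStrip_apply (hl : l ∈ μ.horizontalStrips) (S : SemistandardYoungTableau l)
    (hS : ∀ i j, (i, j) ∈ l → S i j < d) (i j : ℕ) :
    extendStrip hl S hS i j = if (i, j) ∈ l then S i j else if (i, j) ∈ μ then d else 0 :=
  rfl

lemma shapeBelow_extendStrip (hl : l ∈ μ.horizontalStrips) (S : SemistandardYoungTableau l)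
    (hS : ∀ i j, (i, j) ∈ l → S i j < d) : (extendStrip hl S hS).shapeBelow d = l := by
  refine YoungDiagram.ext (Finset.ext fun c => ?_)
  rw [mem_cells, mem_cells, mem_shapeBelow, extendStrip_apply]
  by_cases hc : c ∈ l
  · simpa [hc] using ⟨le_of_mem_horizontalStrips hl hc, hS _ _ hc⟩
  · simp +contextual [hc]

end SemistandardYoungTableau

instance BoundedSSYT.finite (μ : YoungDiagram) (d : ℕ) : Finite (BoundedSSYT μ d) :=
  Finite.of_injective (β := μ.cells → Fin d) (fun T c => ⟨T.1 c.1.1 c.1.2, T.2 _ _ c.2⟩)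
    fun _ _ h => Subtype.ext <| SemistandardYoungTableau.ext_of_mem fun i j hm =>
      congrArg Fin.val (congrFun h ⟨(i, j), hm⟩)

lemma BoundedSSYT.sigma_ext {μ : YoungDiagram} {d : ℕ}
    {a b : Σ l : μ.horizontalStrips, BoundedSSYT l d}
    (h1 : a.1.1 = b.1.1) (h2 : ∀ i j, a.2.1 i j = b.2.1 i j) : a = b := by
  obtain ⟨⟨l, hl⟩, S, hS⟩ := a
  obtain ⟨⟨l', hl'⟩, S', hS'⟩ := b
  subst h1
  obtain rfl : S = S' := SemistandardYoungTableau.ext h2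
  rfl

open SemistandardYoungTableau in
def BoundedSSYT.equivSigmaHorizontalStrips (μ : YoungDiagram) (d : ℕ) :
    BoundedSSYT μ (d + 1) ≃ Σ l : μ.horizontalStrips, BoundedSSYT l d where
  toFun T := ⟨⟨T.1.shapeBelow d, shapeBelow_mem_horizontalStrips T.2⟩,
    ⟨T.1.restrictBelow d, fun i j hm => by
      rw [restrictBelow_apply, if_pos hm]
      exact (mem_shapeBelow.mp hm).2⟩⟩
  invFun p := ⟨extendStrip p.1.2 p.2.1 p.2.2, fun i j hm => by
    rw [extendStrip_apply]
    split_ifs with h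
    · exact (p.2.2 i j h).trans (Nat.lt_succ_self d)
    · exact Nat.lt_succ_self d⟩
  left_inv := by
    rintro ⟨T, hT⟩
    refine Subtype.ext (ext_of_mem fun i j hm => ?_)
    dsimp only
    rw [extendStrip_apply, restrictBelow_apply]
    by_cases h : (i, j) ∈ T.shapeBelow d
    · simp only [if_pos h]
    · rw [if_neg h, if_pos hm]
      have : T i j < d + 1 := hT i j hm
      simp only [mem_shapeBelow, hm, true_and, not_lt] at h
      omega
  right_inv := by
    rintro ⟨⟨l, hl⟩, S, hS⟩
    refine BoundedSSYT.sigma_ext (shapeBelow_extendStrip hl S hS) fun i j => ?_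
    change (if (i, j) ∈ _ then _ else 0) = S i j
    rw [shapeBelow_extendStrip hl S hS, extendStrip_apply]
    split_ifs with h
    · rfl
    · exact (S.zeros h).symm

lemma ssytCount_succ (μ : YoungDiagram) (d : ℕ) :
    ssytCount μ (d + 1) = ∑ l ∈ μ.horizontalStrips, ssytCount l d := by
  rw [ssytCount, Nat.card_congr (BoundedSSYT.equivSigmaHorizontalStrips μ d), Nat.card_sigma,
    ← sum_coe_sort μ.horizontalStrips]
  rfl

section ssytCount

open YoungDiagram

lemma ssytCount_bot (d : ℕ) : ssytCount ⊥ d = 1 := by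
  have : Unique (BoundedSSYT ⊥ d) :=
    { default := ⟨default, fun i j h => absurd h (notMem_bot _)⟩
      uniq := fun T => Subtype.ext <| SemistandardYoungTableau.ext_of_mem fun i j h =>
        absurd h (notMem_bot _) }
  exact Nat.card_unique

lemma ssytCount_zero {μ : YoungDiagram} (h : μ ≠ ⊥) : ssytCount μ 0 = 0 :=
  have : IsEmpty (BoundedSSYT μ 0) := ⟨fun T => Nat.not_lt_zero _ (T.2 0 0 (zero_zero_mem h))⟩
  Nat.card_of_isEmpty

lemma ssytCount_pos {μ : YoungDiagram} {d : ℕ} (h : μ.colLen 0 ≤ d) : 0 < ssytCount μ d :=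
  have : Nonempty (BoundedSSYT μ d) := ⟨⟨SemistandardYoungTableau.highestWeight μ, fun i j hm => by
    rw [SemistandardYoungTableau.highestWeight_apply, if_pos hm]
    exact (fst_lt_colLen_zero hm).trans_le h⟩⟩
  Nat.card_pos

lemma contQ_sub_one {i j : ℕ} (hj : 0 < j) : contQ (i, j - 1) + 1 = contQ (i, j) := by
  simp only [contQ, Nat.cast_sub hj]
  ring

lemma card_mul_ssytCount_zero (μ : YoungDiagram) :
    (μ.card : ℚ) * ssytCount μ 0
      = ∑ x ∈ μ.removableCells, ((0 : ℕ) + contQ x) * ssytCount (μ.eraseCell x) 0 := by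
  rcases eq_or_ne μ ⊥ with rfl | hμ
  · simp [removableCells]
  rw [ssytCount_zero hμ, Nat.cast_zero, mul_zero, eq_comm]
  refine sum_eq_zero fun x hx => ?_
  rcases eq_or_ne (μ.eraseCell x) ⊥ with h | h
  · obtain rfl : x = (0, 0) := by
      by_contra hne
      exact notMem_bot _ (h ▸ (mem_eraseCell hx).mpr ⟨Ne.symm hne, zero_zero_mem hμ⟩)
    simp [contQ]
  · rw [ssytCount_zero h, Nat.cast_zero, mul_zero]

theorem card_mul_ssytCount (d : ℕ) (μ : YoungDiagram) :
    (μ.card : ℚ) * ssytCount μ d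
      = ∑ x ∈ μ.removableCells, ((d : ℚ) + contQ x) * ssytCount (μ.eraseCell x) d := by
  classical
  induction d generalizing μ with
  | zero => exact card_mul_ssytCount_zero μ
  | succ d ih =>
    set N := μ.colLen 0
    have hstrip : ∀ l ∈ μ.horizontalStrips, (μ.card : ℚ) * ssytCount l d
        = (∑ i ∈ range N, ((μ.rowLen i : ℚ) - l.rowLen i)) * ssytCount l d
          + ∑ y ∈ l.removableCells, ((d : ℚ) + contQ y) * ssytCount (l.eraseCell y) d := by
      intro l hl
      rw [← ih l, sum_sub_distrib, ← Nat.cast_sum, ← Nat.cast_sum, ← card_eq_sum_rowLen le_rfl,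
        ← card_eq_sum_rowLen (colLen_zero_mono (le_of_mem_horizontalStrips hl))]
      ring
    calc (μ.card : ℚ) * ssytCount μ (d + 1)
        = ∑ l ∈ μ.horizontalStrips, (μ.card : ℚ) * ssytCount l d := by
          rw [ssytCount_succ, Nat.cast_sum, mul_sum]
      _ = ∑ κ ∈ μ.subdiagrams, ((if Interlaces κ.rowLen μ.rowLen then
              ∑ i ∈ range N, ((μ.rowLen i : ℚ) - κ.rowLen i) else 0)
            + ∑ i ∈ range N with AddableInterlacing κ.rowLen μ.rowLen i,
                ((d : ℚ) + contQ (i, κ.rowLen i))) * ssytCount κ d := by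
          rw [sum_congr rfl hstrip, sum_add_distrib,
            sum_horizontalStrips_sum_removableCells
              (fun κ y => ((d : ℚ) + contQ y) * ssytCount κ d) (N := N) le_rfl,
            horizontalStrips, sum_filter, ← sum_add_distrib]
          refine sum_congr rfl fun κ _ => ?_
          split_ifs <;> simp only [add_mul, sum_mul, zero_add]
      _ = ∑ κ ∈ μ.subdiagrams, ∑ i ∈ range N with RemovableInterlacing κ.rowLen μ.rowLen i,
            (((d + 1 : ℕ) : ℚ) + contQ (i, μ.rowLen i - 1)) * ssytCount κ d := by
          refine sum_congr rfl fun κ _ => ?_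
          rw [interlacing_content_sum (μ.rowLen_anti) (κ.rowLen_anti)
            (rowLen_eq_zero_of_colLen_zero_le le_rfl), sum_mul]
          refine sum_congr rfl fun i hi => ?_
          have hpos : 0 < μ.rowLen i := (Nat.zero_le _).trans_lt (mem_filter.mp hi).2.1
          rw [← contQ_sub_one hpos]
          push_cast
          ring
      _ = ∑ x ∈ μ.removableCells,
            (((d + 1 : ℕ) : ℚ) + contQ x) * ssytCount (μ.eraseCell x) (d + 1) := by
          rw [← sum_removableCells_sum_horizontalStrips
            (fun κ x => (((d + 1 : ℕ) : ℚ) + contQ x) * ssytCount κ d) (N := N) le_rfl]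
          refine sum_congr rfl fun x _ => ?_
          rw [ssytCount_succ, Nat.cast_sum, mul_sum]

end ssytCount

namespace YoungDiagram

variable {μ : YoungDiagram} {m : ℕ}

def SatChain (μ : YoungDiagram) (n : ℕ) : Type :=
  {T : Fin (n + 1) → YoungDiagram // T 0 = ⊥ ∧ T (Fin.last n) = μ ∧
    ∀ i : Fin n, T i.castSucc ≤ T i.succ ∧ (T i.succ).card = (T i.castSucc).card + 1}

lemma sytCount_eq_card_satChain (h : μ.card = m) : sytCount μ = Nat.card (μ.SatChain m) := by
  subst h
  rfl

lemma SatChain.le (T : μ.SatChain m) (k : Fin (m + 1)) : T.1 k ≤ μ :=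
  (Fin.monotone_iff_le_succ.mpr (fun i => (T.2.2.2 i).1) (Fin.le_last k)).trans_eq T.2.2.1

instance SatChain.finite (μ : YoungDiagram) (m : ℕ) : Finite (μ.SatChain m) :=
  have := μ.finite_Iic.to_subtype
  Finite.of_injective (β := Fin (m + 1) → Set.Iic μ) (fun T k => ⟨T.1 k, T.le k⟩)
    fun _ _ h => Subtype.ext (funext fun k => congrArg Subtype.val (congrFun h k))

def SatChain.penultimate (T : μ.SatChain (m + 1)) : {ν // ν ≤ μ ∧ ν.card + 1 = μ.card} :=
  ⟨T.1 (Fin.last m).castSucc, by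
    have h := T.2.2.2 (Fin.last m)
    rw [Fin.succ_last, T.2.2.1] at h
    exact ⟨h.1, h.2.symm⟩⟩

def SatChain.fiberEquiv (ν : {ν // ν ≤ μ ∧ ν.card + 1 = μ.card}) :
    {T : μ.SatChain (m + 1) // T.penultimate = ν} ≃ ν.1.SatChain m where
  toFun T := ⟨Fin.init T.1.1, T.1.2.1, congrArg Subtype.val T.2, fun i => by
    simpa only [Fin.init, Fin.succ_castSucc] using T.1.2.2.2 i.castSucc⟩
  invFun S := ⟨⟨Fin.snoc S.1 μ, by
    have h := Fin.snoc_castSucc (α := fun _ => YoungDiagram) (p := S.1) (x := μ) 0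
    rw [Fin.castSucc_zero] at h
    exact h.trans S.2.1, Fin.snoc_last _ _,
    fun i => by
      refine Fin.lastCases ?_ (fun j => ?_) i
      · simpa [S.2.2.1] using ⟨ν.2.1, ν.2.2.symm⟩
      · simpa only [Fin.succ_castSucc, Fin.snoc_castSucc] using S.2.2.2 j⟩,
    Subtype.ext (by simp [penultimate, S.2.2.1])⟩
  left_inv T := by
    refine Subtype.ext (Subtype.ext ?_)
    change Fin.snoc (Fin.init T.1.1) μ = T.1.1
    exact (congrArg (Fin.snoc (Fin.init T.1.1)) T.1.2.2.1).symm.trans (Fin.snoc_init_self _)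
  right_inv S := Subtype.ext (Fin.init_snoc (α := fun _ => YoungDiagram) μ S.1)

noncomputable def removableCellsEquiv (μ : YoungDiagram) :
    μ.removableCells ≃ {ν // ν ≤ μ ∧ ν.card + 1 = μ.card} :=
  Equiv.ofBijective (fun x => ⟨μ.eraseCell x, eraseCell_le x.2, card_eraseCell x.2⟩)
    ⟨fun x x' h => Subtype.ext (eraseCell_injOn x.2 x'.2 (congrArg Subtype.val h)),
      fun ν => by
        obtain ⟨x, hx, h⟩ := exists_eraseCell_eq ν.2.1 ν.2.2
        exact ⟨⟨x, hx⟩, Subtype.ext h⟩⟩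

end YoungDiagram

open YoungDiagram

lemma sytCount_eq_sum_removableCells {μ : YoungDiagram} {m : ℕ} (hm : μ.card = m + 1) :
    sytCount μ = ∑ x ∈ μ.removableCells, sytCount (μ.eraseCell x) := by
  classical
  have : Fintype {ν // ν ≤ μ ∧ ν.card + 1 = μ.card} :=
    Fintype.ofEquiv _ μ.removableCellsEquiv
  rw [sytCount_eq_card_satChain hm,
    ← Nat.card_congr (Equiv.sigmaFiberEquiv SatChain.penultimate), Nat.card_sigma,
    ← sum_coe_sort μ.removableCells, ← Equiv.sum_comp μ.removableCellsEquiv]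
  refine sum_congr rfl fun x _ => ?_
  have hcard : (μ.eraseCell x).card = m := by
    have := card_eraseCell x.2
    omega
  rw [Nat.card_congr (SatChain.fiberEquiv _), sytCount_eq_card_satChain hcard]
  rfl

lemma sytCount_bot : sytCount ⊥ = 1 := by
  have : Unique ((⊥ : YoungDiagram).SatChain 0) :=
    { default := ⟨fun _ => ⊥, rfl, rfl, fun i => i.elim0⟩
      uniq := fun T => Subtype.ext (funext fun k => le_bot_iff.mp (T.le k)) }
  rw [sytCount_eq_card_satChain (m := 0) rfl, Nat.card_unique]

lemma sytCount_pos (μ : YoungDiagram) : 0 < sytCount μ := by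
  induction h : μ.card generalizing μ with
  | zero => rw [YoungDiagram.card_eq_zero.mp h, sytCount_bot]; exact one_pos
  | succ m ih =>
    have hμ : μ ≠ ⊥ := fun hμ => by
      rw [YoungDiagram.card_eq_zero.mpr hμ] at h
      omega
    rw [sytCount_eq_sum_removableCells h]
    exact sum_pos (fun x hx => ih _ (by have := card_eraseCell hx; omega))
      (removableCells_nonempty hμ)

theorem factorial_card_mul_ssytCount (μ : YoungDiagram) (d : ℕ) :
    (μ.card.factorial : ℚ) * ssytCount μ d
      = (∏ c ∈ μ.cells, ((d : ℚ) + contQ c)) * sytCount μ := by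
  induction h : μ.card generalizing μ with
  | zero =>
    obtain rfl := YoungDiagram.card_eq_zero.mp h
    simp [ssytCount_bot, sytCount_bot]
  | succ m ih =>
    calc ((m + 1).factorial : ℚ) * ssytCount μ d
        = m.factorial * ((μ.card : ℚ) * ssytCount μ d) := by
          rw [Nat.factorial_succ, h]
          push_cast
          ring
      _ = ∑ x ∈ μ.removableCells,
            ((d : ℚ) + contQ x) * (m.factorial * ssytCount (μ.eraseCell x) d) := by
          rw [card_mul_ssytCount, mul_sum]
          exact sum_congr rfl fun x _ => by ring
      _ = ∑ x ∈ μ.removableCells,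
            (∏ c ∈ μ.cells, ((d : ℚ) + contQ c)) * sytCount (μ.eraseCell x) := by
          refine sum_congr rfl fun x hx => ?_
          rw [ih _ (by have := card_eraseCell hx; omega),
            prod_cells_eq_mul_prod_cells_eraseCell hx]
          ring
      _ = (∏ c ∈ μ.cells, ((d : ℚ) + contQ c)) * sytCount μ := by
          rw [← mul_sum, sytCount_eq_sum_removableCells h, Nat.cast_sum]

theorem content_into_dims_general (d p : ℕ)
    (μ lam : YoungDiagram) (x : ℕ × ℕ)
    (hμcard : μ.card = p) (hsub : lam ≤ μ) (hstep : lam.card + 1 = μ.card)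
    (hxin : x ∈ μ) (hxout : x ∉ lam) (hrows : μ.colLen 0 ≤ d) :
    (d : ℚ) + contQ x =
      (p : ℚ) * ((sytCount lam : ℚ) / (sytCount μ : ℚ)) *
        ((ssytCount μ d : ℚ) / (ssytCount lam d : ℚ)) := by
  obtain ⟨y, hy, rfl⟩ := exists_eraseCell_eq hsub hstep
  obtain rfl : x = y := by
    by_contra hne
    exact hxout ((mem_eraseCell hy).mpr ⟨hne, hxin⟩)
  have hμ := factorial_card_mul_ssytCount μ d
  have hlam := factorial_card_mul_ssytCount (μ.eraseCell x) d
  rw [← hstep, Nat.factorial_succ, prod_cells_eq_mul_prod_cells_eraseCell hy] at hμ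
  subst hμcard
  have hf : (sytCount μ : ℚ) ≠ 0 := by exact_mod_cast (sytCount_pos μ).ne'
  have hm : (ssytCount (μ.eraseCell x) d : ℚ) ≠ 0 := by
    exact_mod_cast (ssytCount_pos ((colLen_zero_mono hsub).trans hrows)).ne'
  have hfac : ((μ.eraseCell x).card.factorial : ℚ) ≠ 0 := by positivity
  rw [← hstep]
  field_simp
  apply mul_left_cancel₀ hfac
  push_cast at hμ ⊢
  linear_combination (((d : ℚ) + contQ x) * sytCount μ) * hlam - sytCount (μ.eraseCell x) * hμ

/-- For `μ ⊢ p` with at most `d` rows and `λ = μ \ x` obtained by removing a cell `x`: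
`d + cont(x) = p · (d_λ / d_μ) · (m_μ / m_λ)`, where `d_ν` counts standard Young
tableaux of shape `ν` and `m_ν` counts semistandard Young tableaux of shape `ν` with
entries in `d` symbols. -/
theorem content_into_dims (d p : ℕ) (hd : 1 ≤ d) (hp : 1 ≤ p)
    (μ lam : YoungDiagram) (x : ℕ × ℕ)
    (hμcard : μ.card = p) (hsub : lam ≤ μ) (hstep : lam.card + 1 = μ.card)
    (hxin : x ∈ μ) (hxout : x ∉ lam) (hrows : μ.colLen 0 ≤ d) :
    (d : ℚ) + contQ x =
      (p : ℚ) * ((sytCount lam : ℚ) / (sytCount μ : ℚ)) *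
        ((ssytCount μ d : ℚ) / (ssytCount lam d : ℚ)) :=
  content_into_dims_general d p μ lam x hμcard hsub hstep hxin hxout hrows
end
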